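/- The maximum of |U(λ)| over all λ ∈ ℝ^m with strictly positive coordinates such that U(λ) has rank m equals binom(m, ⌈m/2⌉), achieved by λ = (1/⌈m/2⌉)·𝟙 (for m ≥ 2). -/

import Mathlib

/-- The unificators of `λ ∈ ℝ^m`, viewed as subsets `S ⊆ [m]` with `∑_{i∈S} λ_i = 1`. -/
def unifSets (m : ℕ) (l : Fin m → ℝ) : Set (Finset (Fin m)) :=
  {S | ∑ i ∈ S, l i = 1}

/-- The characteristic vector of `S ⊆ [m]`. -/
def charVec (m : ℕ) (S : Finset (Fin m)) : Fin m → ℝ :=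
  fun i => if i ∈ S then 1 else 0

/-- The rank of `U(λ)`: the dimension of the span of its characteristic vectors. -/
noncomputable def unifRank (m : ℕ) (l : Fin m → ℝ) : ℕ :=
  Module.finrank ℝ (Submodule.span ℝ (charVec m '' unifSets m l))

lemma unif_eq (m k : ℕ) (hk : k ≠ 0) :
    unifSets m (fun _ => ((k : ℕ) : ℝ)⁻¹) = {S | S.card = k} := by
  ext S
  have hk' : ((k : ℝ)) ≠ 0 := Nat.cast_ne_zero.2 hk
  simp only [unifSets, Set.mem_setOf_eq, Finset.sum_const, nsmul_eq_mul]
  constructor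
  · intro h
    have : (S.card : ℝ) = k := by
      field_simp at h; exact_mod_cast h
    exact_mod_cast this
  · intro h
    rw [h]; field_simp

lemma diff_mem_span (m k : ℕ) (hk1 : 1 ≤ k) (hkm : k ≤ m - 1)
    (i j : Fin m) (hij : i ≠ j) :
    (Pi.single i 1 - Pi.single j 1 : Fin m → ℝ) ∈
      Submodule.span ℝ (charVec m '' {S : Finset (Fin m) | S.card = k}) := by
  classical
  obtain ⟨S, hiS, hSsub, hScard⟩ := Finset.exists_subsuperset_card_eq
    (s := {i}) (t := Finset.univ.erase j) (by simp [hij]) (by simpa using hk1)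
    (by simp [Finset.card_erase_of_mem]; omega)
  have hiS' : i ∈ S := hiS (by simp)
  have hjS : j ∉ S := fun h => (Finset.mem_erase.1 (hSsub h)).1 rfl
  set T : Finset (Fin m) := insert j (S.erase i) with hT
  have hTcard : T.card = k := by
    rw [hT, Finset.card_insert_of_notMem (by simp [hjS, Ne.symm hij]),
      Finset.card_erase_of_mem hiS', hScard]; omega
  have key : (Pi.single i 1 - Pi.single j 1 : Fin m → ℝ) = charVec m S - charVec m T := by
    funext x
    by_cases hx : x = i
    · subst hx
      simp [charVec, hT, hiS', hij, Pi.single_eq_same, Pi.single_eq_of_ne hij]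
    · by_cases hx' : x = j
      · subst hx'
        simp [charVec, hT, hjS, Ne.symm hij, Pi.single_eq_of_ne (Ne.symm hij)]
      · simp [charVec, hT, hx, hx', Pi.single_eq_of_ne hx, Pi.single_eq_of_ne hx']
  rw [key]
  exact sub_mem (Submodule.subset_span ⟨S, hScard, rfl⟩)
    (Submodule.subset_span ⟨T, hTcard, rfl⟩)

lemma single_mem_span (m k : ℕ) (hk1 : 1 ≤ k) (hkm : k ≤ m - 1) (i : Fin m) :
    (Pi.single i 1 : Fin m → ℝ) ∈
      Submodule.span ℝ (charVec m '' {S : Finset (Fin m) | S.card = k}) := by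
  classical
  set p := Submodule.span ℝ (charVec m '' {S : Finset (Fin m) | S.card = k})
  obtain ⟨S, hiS, -, hScard⟩ := Finset.exists_subsuperset_card_eq
    (s := {i}) (t := Finset.univ) (Finset.subset_univ _) (by simpa using hk1)
    (by simp; omega)
  have hiS' : i ∈ S := hiS (by simp)
  have key : (k : ℝ) • (Pi.single i 1 : Fin m → ℝ)
      = charVec m S
        + ∑ l ∈ S.erase i, ((Pi.single i 1 : Fin m → ℝ) - Pi.single l 1) := by
    funext x
    simp only [charVec, Pi.smul_apply, Pi.add_apply, Finset.sum_apply, Pi.sub_apply,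
      smul_eq_mul]
    rw [Finset.sum_sub_distrib]
    rw [Finset.sum_const, Finset.sum_pi_single]
    by_cases hx : x = i
    · subst hx
      simp only [Pi.single_eq_same, Finset.card_erase_of_mem hiS', hScard,
        Finset.mem_erase, ne_eq, not_true_eq_false, false_and, if_false, if_pos hiS',
        mul_one, nsmul_eq_mul]
      rw [Nat.cast_sub hk1]
      push_cast
      ring
    · rw [Pi.single_eq_of_ne hx]
      have hiff : x ∈ S.erase i ↔ x ∈ S := by simp [Finset.mem_erase, hx]
      by_cases hxS : x ∈ S <;> simp [hxS, hiff, hx]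
  have hk0 : (k : ℝ) ≠ 0 := Nat.cast_ne_zero.2 (by omega)
  have hmem : (k : ℝ) • (Pi.single i 1 : Fin m → ℝ) ∈ p := by
    rw [key]
    refine add_mem (Submodule.subset_span ⟨S, hScard, rfl⟩) (Submodule.sum_mem _ ?_)
    intro l hl
    exact diff_mem_span m k hk1 hkm i l (Ne.symm (Finset.mem_erase.1 hl).1)
  have := Submodule.smul_mem p (k : ℝ)⁻¹ hmem
  rwa [inv_smul_smul₀ hk0] at this

lemma span_top (m k : ℕ) (hk1 : 1 ≤ k) (hkm : k ≤ m - 1) :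
    Submodule.span ℝ (charVec m '' {S : Finset (Fin m) | S.card = k}) = ⊤ := by
  rw [eq_top_iff, ← (Pi.basisFun ℝ (Fin m)).span_eq, Submodule.span_le]
  rintro _ ⟨i, rfl⟩
  simpa [Pi.basisFun_apply] using single_mem_span m k hk1 hkm i

lemma antichain_unif (m : ℕ) (l : Fin m → ℝ) (hl : ∀ i, 0 < l i) :
    IsAntichain (· ⊆ ·) (unifSets m l) := by
  intro S hS T hT hne hsub
  have hne' : (T \ S).Nonempty := by
    rw [Finset.sdiff_nonempty]
    intro h
    exact hne (Finset.Subset.antisymm hsub h)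
  have hpos : 0 < ∑ i ∈ T \ S, l i := Finset.sum_pos (fun i _ => hl i) hne'
  have := Finset.sum_sdiff (f := l) hsub
  rw [hS, hT] at this
  linarith

lemma ncard_le (m : ℕ) (l : Fin m → ℝ) (hl : ∀ i, 0 < l i) :
    (unifSets m l).ncard ≤ Nat.choose m ((m + 1) / 2) := by
  classical
  have hfin : (unifSets m l).Finite := Set.toFinite _
  have hanti : IsAntichain (· ⊆ ·) ((hfin.toFinset : Finset (Finset (Fin m))) :
      Set (Finset (Fin m))) := by
    rw [Set.Finite.coe_toFinset]
    exact antichain_unif m l hl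
  have := IsAntichain.sperner hanti
  rw [Set.ncard_eq_toFinset_card' ] at *
  have heq : Nat.choose m ((m + 1) / 2) = Nat.choose m (m / 2) := by
    rw [show (m + 1) / 2 = m - m / 2 by omega]
    exact Nat.choose_symm (Nat.div_le_self m 2)
  rw [heq]
  simpa [Set.ncard_eq_toFinset_card' , Fintype.card_fin] using this

/-- For `m ≥ 2`, the maximum of `|U(λ)|` over strictly positive `λ ∈ ℝ^m` with
`rk U(λ) = m` equals `binom(m, ⌈m/2⌉)`, achieved by `λ = (1/⌈m/2⌉)·𝟙`. -/
theorem stmt7 (m : ℕ) (hm : 2 ≤ m) :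
    IsGreatest {c : ℕ | ∃ l : Fin m → ℝ, (∀ i, 0 < l i) ∧ unifRank m l = m ∧
        (unifSets m l).ncard = c} (Nat.choose m ((m + 1) / 2)) ∧
      ((∀ i : Fin m, 0 < ((((m + 1) / 2 : ℕ) : ℝ)⁻¹ : ℝ)) ∧
        unifRank m (fun _ => (((m + 1) / 2 : ℕ) : ℝ)⁻¹) = m ∧
        (unifSets m (fun _ => (((m + 1) / 2 : ℕ) : ℝ)⁻¹)).ncard =
          Nat.choose m ((m + 1) / 2)) := by
  classical
  set k := (m + 1) / 2 with hkdef
  have hk1 : 1 ≤ k := by omega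
  have hkm : k ≤ m - 1 := by omega
  have hpos : ∀ i : Fin m, 0 < (((k : ℕ) : ℝ)⁻¹ : ℝ) := fun _ => by
    have : (0 : ℝ) < k := by exact_mod_cast (by omega : 0 < k)
    positivity
  have hsets : unifSets m (fun _ => ((k : ℕ) : ℝ)⁻¹) = {S | S.card = k} :=
    unif_eq m k (by omega)
  have hrank : unifRank m (fun _ => ((k : ℕ) : ℝ)⁻¹) = m := by
    rw [unifRank, hsets, span_top m k hk1 hkm, finrank_top]
    simp [Module.finrank_pi]
  have hncard : (unifSets m (fun _ => ((k : ℕ) : ℝ)⁻¹)).ncard = Nat.choose m k := by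
    rw [hsets]
    have : ({S : Finset (Fin m) | S.card = k} : Set (Finset (Fin m)))
        = ↑(Finset.powersetCard k (Finset.univ : Finset (Fin m))) := by
      ext S; simp [Finset.mem_powersetCard_univ]
    rw [this, Set.ncard_coe_finset, Finset.card_powersetCard, Finset.card_univ,
      Fintype.card_fin]
  refine ⟨⟨⟨fun _ => ((k : ℕ) : ℝ)⁻¹, hpos, hrank, hncard⟩, ?_⟩, hpos, hrank, hncard⟩
  rintro c ⟨l, hl, -, rfl⟩
  exact ncard_le m l hl
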